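/- arXiv:1711.01498 — 2 statements merged into one kernel-verified Lean document; each statement's English description precedes it below -/
import Mathlib

section
/- Let A ⊆ ℝ^d be a discrete point set that is bounded distance equivalent to ℤ^d, and suppose A is partitioned into n pairwise disjoint subsets A = M_1 ∪ ⋯ ∪ M_n such that M_i is bounded distance equivalent to M_j for all i, j. Then each M_i is bounded distance equivalent to the lattice n^{1/d}·ℤ^d. -/
open MeasureTheory Set ENNReal

namespace BDEProof

variable {d : ℕ}

def emb (d : ℕ) (β : ℝ) (z : Fin d → ℤ) : EuclideanSpace ℝ (Fin d) := WithLp.toLp 2 (fun t => β * (z t : ℝ))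

def cube (d : ℕ) (α : ℝ) (w : EuclideanSpace ℝ (Fin d)) : Set (EuclideanSpace ℝ (Fin d)) :=
  {y | ∀ t, y t ∈ Set.Ico (w t - α/2) (w t + α/2)}

def nbhd (d : ℕ) (r : ℝ) (S : Set (EuclideanSpace ℝ (Fin d))) : Set (EuclideanSpace ℝ (Fin d)) :=
  {y | ∃ x ∈ S, dist y x ≤ r}

def latP (d : ℕ) (β : ℝ) (Y : Set (EuclideanSpace ℝ (Fin d))) : Set (Fin d → ℤ) :=
  {z | emb d β z ∈ Y}

lemma cube_eq (α : ℝ) (w : EuclideanSpace ℝ (Fin d)) : cube d α w = (MeasurableEquiv.toLp 2 (Fin d → ℝ)).symm ⁻¹' (Set.univ.pi fun t => Set.Ico (w t - α/2) (w t + α/2)) := by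
  ext y; simp [cube, Set.mem_pi]

lemma cube_measurable (α : ℝ) (w : EuclideanSpace ℝ (Fin d)) : MeasurableSet (cube d α w) := by
  rw [cube_eq]
  exact (MeasurableEquiv.measurable _) (MeasurableSet.univ_pi fun t => measurableSet_Ico)

lemma cube_volume (α : ℝ) (w : EuclideanSpace ℝ (Fin d)) :
    volume (cube d α w) = ENNReal.ofReal α ^ d := by
  rw [cube_eq, (EuclideanSpace.volume_preserving_symm_measurableEquiv_toLp (Fin d)).measure_preimage
    ((MeasurableSet.univ_pi fun t => measurableSet_Ico).nullMeasurableSet),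
    volume_pi_pi]
  have : ∀ t : Fin d, volume (Set.Ico (w t - α/2) (w t + α/2)) = ENNReal.ofReal α := by
    intro t; rw [Real.volume_Ico]; ring_nf
  simp [this]

lemma dist_le_of_mem_cube {α : ℝ} (hα : 0 ≤ α) {w y : EuclideanSpace ℝ (Fin d)}
    (hy : y ∈ cube d α w) : dist y w ≤ α * Real.sqrt d / 2 := by
  rw [EuclideanSpace.dist_eq]
  have h1 : ∀ t, dist (y t) (w t) ^ 2 ≤ (α/2)^2 := by
    intro t
    have ht := hy t
    rw [Real.dist_eq]
    have h2 : |y t - w t| ≤ α/2 := by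
      rw [abs_le]
      exact ⟨by linarith [ht.1], by linarith [ht.2]⟩
    exact sq_le_sq' (by linarith [abs_nonneg (y t - w t)]) h2
  have h3 : Real.sqrt (∑ t, dist (y t) (w t) ^ 2) ≤ Real.sqrt (∑ t : Fin d, (α/2)^2) :=
    Real.sqrt_le_sqrt (Finset.sum_le_sum fun t _ => h1 t)
  have h4 : (∑ t : Fin d, (α/2)^2) = (d : ℝ) * (α/2)^2 := by
    simp [Finset.sum_const, mul_comm]
  rw [h4] at h3
  have h5 : Real.sqrt ((d:ℝ) * (α/2)^2) = Real.sqrt d * (α/2) := by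
    rw [Real.sqrt_mul (by positivity), Real.sqrt_sq (by positivity)]
  rw [h5] at h3
  linarith

lemma exists_mem_cube {α : ℝ} (hα : 0 < α) (y : EuclideanSpace ℝ (Fin d)) :
    ∃ z : Fin d → ℤ, y ∈ cube d α (emb d α z) := by
  refine ⟨fun t => ⌊y t / α + 1/2⌋, fun t => ?_⟩
  have h1 := Int.floor_le (y t / α + 1/2)
  have h2 := Int.lt_floor_add_one (y t / α + 1/2)
  constructor
  · have h3 : (⌊y t / α + 1/2⌋ : ℝ) - 1/2 ≤ y t / α := by linarith
    have h4 := mul_le_mul_of_nonneg_left h3 hα.le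
    rw [mul_div_cancel₀ _ hα.ne'] at h4
    simp only [mul_sub] at h4
    simp only [emb]
    linarith
  · have h3 : y t / α < (⌊y t / α + 1/2⌋ : ℝ) + 1/2 := by linarith
    have h4 := mul_lt_mul_of_pos_left h3 hα
    rw [mul_div_cancel₀ _ hα.ne'] at h4
    simp only [mul_add] at h4
    simp only [emb]
    linarith

lemma cube_disjoint {α : ℝ} (hα : 0 < α) {z z' : Fin d → ℤ} (h : z ≠ z') :
    Disjoint (cube d α (emb d α z)) (cube d α (emb d α z')) := by
  rw [Set.disjoint_left]
  intro y hy hy'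
  apply h
  funext t
  have a1 := hy t; have a2 := hy' t
  simp only [Set.mem_Ico, emb] at a1 a2
  have key : |α * (z t : ℝ) - α * (z' t : ℝ)| < α := by
    rw [abs_lt]
    constructor <;> nlinarith [a1.1, a1.2, a2.1, a2.2]
  rw [← mul_sub, abs_mul, abs_of_pos hα] at key
  have h3 : |(z t : ℝ) - (z' t : ℝ)| < 1 := by nlinarith [abs_nonneg ((z t : ℝ) - (z' t:ℝ))]
  have h4 : |((z t - z' t : ℤ) : ℝ)| < 1 := by push_cast; exact h3
  rw [← Int.cast_abs] at h4
  have h5 : |z t - z' t| < 1 := by exact_mod_cast h4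
  rw [abs_lt] at h5
  omega

lemma nbhd_mono {r r' : ℝ} (h : r ≤ r') (S : Set (EuclideanSpace ℝ (Fin d))) :
    nbhd d r S ⊆ nbhd d r' S := fun _ ⟨x, hx, hd'⟩ => ⟨x, hx, hd'.trans h⟩

lemma counting {α β : ℝ} (hα : 0 < α) (hβ : 0 < β) {Y : Set (EuclideanSpace ℝ (Fin d))} {R : ℝ}
    (h1 : (latP d β Y).Finite) (h2 : (latP d α (nbhd d R Y)).Finite)
    (hR : β * Real.sqrt d / 2 + α * Real.sqrt d / 2 ≤ R) :
    (h1.toFinset.card : ℝ≥0∞) * ENNReal.ofReal β ^ d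
      ≤ (h2.toFinset.card : ℝ≥0∞) * ENNReal.ofReal α ^ d := by
  have vol1 : volume (⋃ z ∈ h1.toFinset, cube d β (emb d β z))
      = (h1.toFinset.card : ℝ≥0∞) * ENNReal.ofReal β ^ d := by
    rw [measure_biUnion_finset ?disj (fun z _ => cube_measurable β (emb d β z))]
    · simp [cube_volume, Finset.sum_const, mul_comm]
    case disj =>
      intro z _ z' _ hzz'
      exact cube_disjoint hβ hzz'
  have vol2 : volume (⋃ z ∈ h2.toFinset, cube d α (emb d α z))
      = (h2.toFinset.card : ℝ≥0∞) * ENNReal.ofReal α ^ d := by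
    rw [measure_biUnion_finset ?disj (fun z _ => cube_measurable α (emb d α z))]
    · simp [cube_volume, Finset.sum_const, mul_comm]
    case disj =>
      intro z _ z' _ hzz'
      exact cube_disjoint hα hzz'
  rw [← vol1, ← vol2]
  apply measure_mono
  intro y hy
  simp only [Set.mem_iUnion] at hy ⊢
  obtain ⟨z, hz, hyz⟩ := hy
  rw [Set.Finite.mem_toFinset] at hz
  have hy1 : dist y (emb d β z) ≤ β * Real.sqrt d / 2 := dist_le_of_mem_cube hβ.le hyz
  obtain ⟨z', hyz'⟩ := exists_mem_cube hα y
  refine ⟨z', ?_, hyz'⟩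
  rw [Set.Finite.mem_toFinset]
  have hy2 : dist y (emb d α z') ≤ α * Real.sqrt d / 2 := dist_le_of_mem_cube hα.le hyz'
  show emb d α z' ∈ nbhd d R Y
  refine ⟨emb d β z, hz, ?_⟩
  calc dist (emb d α z') (emb d β z) ≤ dist (emb d α z') y + dist y (emb d β z) := dist_triangle _ _ _
    _ ≤ α * Real.sqrt d / 2 + β * Real.sqrt d / 2 := by
        rw [dist_comm (emb d α z') y]; linarith
    _ ≤ R := by linarith

lemma abs_coord_le_norm (x : EuclideanSpace ℝ (Fin d)) (t : Fin d) : |x t| ≤ ‖x‖ := by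
  rw [EuclideanSpace.norm_eq, ← Real.sqrt_sq_eq_abs]
  apply Real.sqrt_le_sqrt
  have : |x t| ^ 2 ≤ ∑ i, ‖x i‖ ^ 2 := by
    have := Finset.single_le_sum (f := fun i => ‖x i‖^2) (fun i _ => by positivity) (Finset.mem_univ t)
    simpa [Real.norm_eq_abs, sq_abs] using this
  simpa [sq_abs] using this

lemma latP_finite {β : ℝ} (hβ : 0 < β) {Y : Set (EuclideanSpace ℝ (Fin d))} {ρ : ℝ}
    (hY : Y ⊆ Metric.closedBall 0 ρ) : (latP d β Y).Finite := by
  apply Set.Finite.subset (Set.finite_Icc (fun _ : Fin d => -⌈ρ/β⌉) (fun _ => ⌈ρ/β⌉))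
  intro z hz
  set y : EuclideanSpace ℝ (Fin d) := WithLp.toLp 2 (fun t => β * (z t : ℝ)) with hy
  have hn : ‖y‖ ≤ ρ := by
    have := hY hz
    simpa [Metric.mem_closedBall, dist_zero_right, emb, hy] using this
  have hcoord : ∀ t, |β * (z t : ℝ)| ≤ ρ := by
    intro t
    have := (abs_coord_le_norm y t).trans hn
    simpa [hy] using this
  rw [Set.mem_Icc]
  constructor <;> intro t
  · have := hcoord t
    rw [abs_mul, abs_of_pos hβ] at this
    have h2 : |(z t : ℝ)| ≤ ρ/β := by
      rw [le_div_iff₀ hβ]; linarith [this]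
    have h3 : -(ρ/β) ≤ (z t : ℝ) := by
      have := abs_le.mp h2; linarith [this.1]
    have h4 : (-⌈ρ/β⌉ : ℝ) ≤ z t := by
      calc (-⌈ρ/β⌉ : ℝ) ≤ -(ρ/β) := by simpa using neg_le_neg (Int.le_ceil (ρ/β))
        _ ≤ z t := h3
    exact_mod_cast h4
  · have := hcoord t
    rw [abs_mul, abs_of_pos hβ] at this
    have h2 : (z t : ℝ) ≤ ρ/β := by
      have h2' : |(z t : ℝ)| ≤ ρ/β := by rw [le_div_iff₀ hβ]; linarith [this]
      linarith [(abs_le.mp h2').2]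
    have h4 : (z t : ℝ) ≤ (⌈ρ/β⌉ : ℝ) := h2.trans (Int.le_ceil _)
    exact_mod_cast h4

lemma emb_injective {β : ℝ} (hβ : β ≠ 0) : Function.Injective (emb d β) := by
  intro z z' h
  funext t
  have := congrFun (congrArg WithLp.ofLp h) t
  simp only [emb] at this
  exact_mod_cast mul_left_cancel₀ hβ this

lemma nbhd_subset_closedBall {S : Set (EuclideanSpace ℝ (Fin d))} {ρ r : ℝ}
    (hS : S ⊆ Metric.closedBall 0 ρ) : nbhd d r S ⊆ Metric.closedBall 0 (ρ + r) := by
  rintro y ⟨x, hx, hd'⟩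
  have hx' : dist x 0 ≤ ρ := by simpa [Metric.mem_closedBall] using hS hx
  have : dist y 0 ≤ dist y x + dist x 0 := dist_triangle _ _ _
  simp only [Metric.mem_closedBall]
  linarith

lemma nbhd_nbhd {S : Set (EuclideanSpace ℝ (Fin d))} {r r' : ℝ} :
    nbhd d r (nbhd d r' S) ⊆ nbhd d (r + r') S := by
  rintro y ⟨x, ⟨x', hx', hd1⟩, hd2⟩
  exact ⟨x', hx', by linarith [dist_triangle y x x']⟩

lemma subLat_finite {α : ℝ} (hα : 0 < α) (x : EuclideanSpace ℝ (Fin d)) (r : ℝ) :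
    {y : ↥(Set.range (emb d α)) | dist x (y : EuclideanSpace ℝ (Fin d)) ≤ r}.Finite := by
  have hfin : (Set.range (emb d α) ∩ Metric.closedBall x r).Finite := by
    have h1 : (latP d α (Metric.closedBall x r)).Finite := by
      apply latP_finite hα (ρ := ‖x‖ + r)
      intro y hy
      simp only [Metric.mem_closedBall] at hy ⊢
      have := dist_triangle y x 0
      simp only [dist_zero_right] at this ⊢
      linarith
    have h2 : Set.range (emb d α) ∩ Metric.closedBall x r ⊆ emb d α '' (latP d α (Metric.closedBall x r)) := by
      rintro y ⟨⟨z, rfl⟩, hy⟩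
      exact ⟨z, hy, rfl⟩
    exact (h1.image _).subset h2
  have : {y : ↥(Set.range (emb d α)) | dist x (y : EuclideanSpace ℝ (Fin d)) ≤ r}
      = (Subtype.val) ⁻¹' (Set.range (emb d α) ∩ Metric.closedBall x r) := by
    ext y
    simp [Metric.mem_closedBall, dist_comm, y.2]
  rw [this]
  exact Set.Finite.preimage (Subtype.val_injective.injOn) hfin

lemma subM_finite {A M' : Set (EuclideanSpace ℝ (Fin d))}
    (hA : ∀ r : ℝ, (A ∩ Metric.closedBall 0 r).Finite) (hM : M' ⊆ A)
    (x : EuclideanSpace ℝ (Fin d)) (r : ℝ) :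
    {y : ↥M' | dist x (y : EuclideanSpace ℝ (Fin d)) ≤ r}.Finite := by
  have hfin : (M' ∩ Metric.closedBall x r).Finite := by
    apply (hA (‖x‖ + r)).subset
    rintro y ⟨hy1, hy2⟩
    refine ⟨hM hy1, ?_⟩
    simp only [Metric.mem_closedBall] at hy2 ⊢
    have := dist_triangle y x 0
    simp only [dist_zero_right] at this ⊢
    linarith
  have : {y : ↥M' | dist x (y : EuclideanSpace ℝ (Fin d)) ≤ r}
      = (Subtype.val) ⁻¹' (M' ∩ Metric.closedBall x r) := by
    ext y
    simp [Metric.mem_closedBall, dist_comm, y.2]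
  rw [this]
  exact Set.Finite.preimage (Subtype.val_injective.injOn) hfin

lemma sb_rel {X Y : Type*} [Nonempty X] (r : X → Y → Prop) (f : X → Y) (g : Y → X)
    (hf : Function.Injective f) (hg : Function.Injective g)
    (hfr : ∀ x, r x (f x)) (hgr : ∀ y, r (g y) y) :
    ∃ e : X ≃ Y, ∀ x, r x (e x) := by
  classical
  haveI : Nonempty Y := ⟨f (Classical.arbitrary X)⟩
  set S : Set X := ⋃ k : ℕ, (g ∘ f)^[k] '' (Set.range g)ᶜ with hS
  have hstep : ∀ x ∈ S, g (f x) ∈ S := by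
    intro x hx
    obtain ⟨_, ⟨k, rfl⟩, hx⟩ := hx
    obtain ⟨u, hu, rfl⟩ := hx
    exact Set.mem_iUnion.2 ⟨k + 1, ⟨u, hu, by rw [Function.iterate_succ_apply']; rfl⟩⟩
  have hrange : ∀ x ∉ S, x ∈ Set.range g := by
    intro x hx
    by_contra hc
    exact hx (Set.mem_iUnion.2 ⟨0, by simpa using hc⟩)
  set h : X → Y := fun x => if x ∈ S then f x else Function.invFun g x with hh
  have hpos : ∀ x ∈ S, h x = f x := by intro x hx; rw [hh]; simp [if_pos hx]
  have hinv : ∀ x ∉ S, g (h x) = x := by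
    intro x hx
    rw [hh]; simp only [if_neg hx]
    exact Function.invFun_eq (hrange x hx)
  have hinj : Function.Injective h := by
    intro a b hab
    by_cases ha : a ∈ S <;> by_cases hb : b ∈ S
    · rw [hpos a ha, hpos b hb] at hab; exact hf hab
    · exfalso
      have : g (f a) = b := by rw [← hpos a ha, hab]; exact hinv b hb
      exact hb (this ▸ hstep a ha)
    · exfalso
      have : g (f b) = a := by rw [← hpos b hb, ← hab]; exact hinv a ha
      exact ha (this ▸ hstep b hb)
    · have h1 := hinv a ha
      have h2 := hinv b hb
      rw [← h1, hab, h2]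
  have hsurj : Function.Surjective h := by
    intro y
    by_cases hgy : g y ∈ S
    · obtain ⟨_, ⟨k, rfl⟩, hx⟩ := hgy
      cases k with
      | zero =>
        exfalso
        simp only [Function.iterate_zero, Set.image_id] at hx
        exact hx ⟨y, rfl⟩
      | succ k =>
        simp only [Function.iterate_succ_apply'] at hx
        obtain ⟨u, hu, huv⟩ := hx
        have ha : (g ∘ f)^[k] u ∈ S := Set.mem_iUnion.2 ⟨k, ⟨u, hu, rfl⟩⟩
        have hfy : f ((g ∘ f)^[k] u) = y := hg huv
        exact ⟨(g ∘ f)^[k] u, by rw [hpos _ ha]; exact hfy⟩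
    · refine ⟨g y, hg (hinv (g y) hgy)⟩
  refine ⟨Equiv.ofBijective h ⟨hinj, hsurj⟩, fun x => ?_⟩
  show r x (h x)
  by_cases hx : x ∈ S
  · rw [hpos x hx]; exact hfr x
  · have := hgr (h x)
    rwa [hinv x hx] at this

end BDEProof

/-- A discrete (locally finite) point set in `ℝ^d`. -/
def DiscretePointSet {d : ℕ} (Λ : Set (EuclideanSpace ℝ (Fin d))) : Prop :=
  ∀ r : ℝ, (Λ ∩ Metric.closedBall 0 r).Finite

/-- Bounded distance equivalence of point sets in `ℝ^d`. -/
def BDE {d : ℕ} (Λ Λ' : Set (EuclideanSpace ℝ (Fin d))) : Prop :=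
  ∃ c : ℝ, 0 < c ∧ ∃ φ : Λ ≃ Λ',
    ∀ x : Λ, ‖(x : EuclideanSpace ℝ (Fin d)) - (φ x : EuclideanSpace ℝ (Fin d))‖ < c

theorem partition_of_bde_lattice {d : ℕ} (hd : 0 < d)
    (A : Set (EuclideanSpace ℝ (Fin d))) (hA : DiscretePointSet A)
    -- `A` is bounded distance equivalent to `ℤ^d`
    (hAZ : BDE A (Set.range fun z : Fin d → ℤ => (WithLp.toLp 2 (fun i => (z i : ℝ)) : EuclideanSpace ℝ (Fin d))))
    (n : ℕ) (hn : 0 < n) (M : Fin n → Set (EuclideanSpace ℝ (Fin d)))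
    -- the `M i` partition `A`
    (hdisj : Pairwise (Function.onFun Disjoint M)) (hunion : (⋃ i, M i) = A)
    -- the parts are pairwise bounded distance equivalent
    (hbde : ∀ i j, BDE (M i) (M j)) :
    ∀ i, BDE (M i)
      (Set.range fun z : Fin d → ℤ =>
        (WithLp.toLp 2 (fun t => (n : ℝ) ^ ((1 : ℝ) / d) * (z t : ℝ)) : EuclideanSpace ℝ (Fin d))) := by
  classical
  intro i
  set α : ℝ := (n : ℝ) ^ ((1 : ℝ) / d) with hα_def
  have hnR : (0:ℝ) < n := by exact_mod_cast hn
  have hαpos : 0 < α := Real.rpow_pos_of_pos hnR _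
  have hαd : ENNReal.ofReal α ^ d = (n : ℝ≥0∞) := by
    rw [← ENNReal.ofReal_pow hαpos.le]
    have hpow : α ^ d = (n : ℝ) := by
      rw [hα_def, ← Real.rpow_natCast ((n:ℝ) ^ ((1:ℝ)/d)) d, ← Real.rpow_mul hnR.le]
      rw [one_div, inv_mul_cancel₀ (by exact_mod_cast hd.ne' : (d:ℝ) ≠ 0), Real.rpow_one]
    rw [hpow, ENNReal.ofReal_natCast]
  show BDE (M i) (Set.range (BDEProof.emb d α))
  have hZeq : (Set.range fun z : Fin d → ℤ => (WithLp.toLp 2 (fun i => (z i : ℝ)) : EuclideanSpace ℝ (Fin d)))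
      = Set.range (BDEProof.emb d 1) := by
    have hfun : (fun z : Fin d → ℤ => (WithLp.toLp 2 (fun i => (z i : ℝ)) : EuclideanSpace ℝ (Fin d)))
        = BDEProof.emb d 1 := by
      funext z
      simp [BDEProof.emb]
    rw [hfun]
  rw [hZeq] at hAZ
  obtain ⟨c', hc', ψ, hψ⟩ := hAZ
  choose cc hcc φφ hφφ using fun j => hbde i j
  set cm : ℝ := ∑ j, cc j with hcm_def
  have hcmj : ∀ j, cc j ≤ cm := fun j => Finset.single_le_sum (fun j _ => (hcc j).le) (Finset.mem_univ j)
  have hcm : 0 < cm := lt_of_lt_of_le (hcc i) (hcmj i)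
  have hsd : (0:ℝ) ≤ Real.sqrt d := Real.sqrt_nonneg _
  set rc : ℝ := Real.sqrt d / 2 + α * Real.sqrt d / 2 with hrc_def
  have hrc : 0 ≤ rc := by positivity
  set R : ℝ := cm + c' + rc with hR_def
  have hRpos : 0 < R := by rw [hR_def]; linarith
  have hMA : ∀ j, M j ⊆ A := fun j => hunion ▸ Set.subset_iUnion M j
  have hjex : ∀ a : ↥A, ∃ j, (a : EuclideanSpace ℝ (Fin d)) ∈ M j := by
    intro a
    have h : (a : EuclideanSpace ℝ (Fin d)) ∈ ⋃ j, M j := by rw [hunion]; exact a.2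
    exact Set.mem_iUnion.mp h
  choose jdx hjdx using hjex
  have hjuniq : ∀ (x : EuclideanSpace ℝ (Fin d)) j j', x ∈ M j → x ∈ M j' → j = j' := by
    intro x j j' h1 h2
    by_contra hne
    exact Set.disjoint_left.mp (hdisj hne) h1 h2
  have hAne : Nonempty ↥A := ⟨ψ.symm ⟨BDEProof.emb d 1 0, ⟨0, rfl⟩⟩⟩
  haveI hMine : Nonempty ↥(M i) := by
    obtain ⟨a⟩ := hAne
    exact ⟨(φφ (jdx a)).symm ⟨a, hjdx a⟩⟩
  have hψ' : ∀ a : ↥A, dist (a : EuclideanSpace ℝ (Fin d)) ↑(ψ a) < c' := by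
    intro a; rw [dist_eq_norm]; exact hψ a
  have hφφ' : ∀ j (x : ↥(M i)), dist (x : EuclideanSpace ℝ (Fin d)) ↑(φφ j x) < cc j := by
    intro j x; rw [dist_eq_norm]; exact hφφ j x
  set tA : ↥(M i) → Finset ↥(Set.range (BDEProof.emb d α)) :=
    fun x => (BDEProof.subLat_finite hαpos ↑x R).toFinset with htA
  set tB : ↥(Set.range (BDEProof.emb d α)) → Finset ↥(M i) :=
    fun y => (BDEProof.subM_finite hA (hMA i) ↑y R).toFinset with htB
  have hmem_tA : ∀ (x : ↥(M i)) (y : ↥(Set.range (BDEProof.emb d α))),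
      y ∈ tA x ↔ dist (x : EuclideanSpace ℝ (Fin d)) ↑y ≤ R := by
    intro x y; rw [htA]; simp [Set.Finite.mem_toFinset]
  have hmem_tB : ∀ (y : ↥(Set.range (BDEProof.emb d α))) (x : ↥(M i)),
      x ∈ tB y ↔ dist (y : EuclideanSpace ℝ (Fin d)) ↑x ≤ R := by
    intro y x; rw [htB]; simp [Set.Finite.mem_toFinset]
  -- Hall condition A
  have hallA : ∀ s : Finset ↥(M i), s.card ≤ (s.biUnion tA).card := by
    intro s
    set Sset : Set (EuclideanSpace ℝ (Fin d)) := Subtype.val '' (↑s : Set ↥(M i)) with hSset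
    obtain ⟨ρ₀, hρ₀⟩ := (Metric.isBounded_iff_subset_closedBall 0).mp
      ((s.finite_toSet.image Subtype.val).isBounded)
    have hY1fin : (BDEProof.latP d 1 (BDEProof.nbhd d (cm + c') Sset)).Finite :=
      BDEProof.latP_finite one_pos (BDEProof.nbhd_subset_closedBall hρ₀)
    have hY2fin : (BDEProof.latP d α (BDEProof.nbhd d rc (BDEProof.nbhd d (cm + c') Sset))).Finite :=
      BDEProof.latP_finite hαpos (BDEProof.nbhd_subset_closedBall (BDEProof.nbhd_subset_closedBall hρ₀))
    -- Step 1 : n * s.card ≤ card of ℤ-lattice points near S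
    have step1 : n * s.card ≤ hY1fin.toFinset.card := by
      have hmap : ∀ p : Fin n × {x // x ∈ s}, ∃ z : Fin d → ℤ,
          BDEProof.emb d 1 z = ↑(ψ ⟨↑(φφ p.1 p.2.1), hMA p.1 (φφ p.1 p.2.1).2⟩) :=
        fun p => (ψ _).2
      choose zf hzf using hmap
      have hzmem : ∀ p, zf p ∈ hY1fin.toFinset := by
        intro p
        rw [Set.Finite.mem_toFinset]
        show BDEProof.emb d 1 (zf p) ∈ BDEProof.nbhd d (cm + c') Sset
        refine ⟨(↑(p.2.1) : EuclideanSpace ℝ (Fin d)), ⟨p.2.1, Finset.mem_coe.mpr p.2.2, rfl⟩, ?_⟩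
        rw [hzf p]
        have h1 := hψ' ⟨↑(φφ p.1 p.2.1), hMA p.1 (φφ p.1 p.2.1).2⟩
        have h2 := hφφ' p.1 p.2.1
        have h3 := dist_triangle
          (↑(ψ (⟨↑(φφ p.1 p.2.1), hMA p.1 (φφ p.1 p.2.1).2⟩ : ↥A)) : EuclideanSpace ℝ (Fin d))
          (↑(φφ p.1 p.2.1) : EuclideanSpace ℝ (Fin d))
          (↑(p.2.1) : EuclideanSpace ℝ (Fin d))
        rw [dist_comm] at h1 h2
        have hcj := hcmj p.1
        simp only at h1 h3
        linarith
      have hinj : Function.Injective (fun p : Fin n × {x // x ∈ s} =>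
          (⟨zf p, hzmem p⟩ : ↥(hY1fin.toFinset))) := by
        intro p p' hpp'
        have hz : zf p = zf p' := congrArg Subtype.val hpp'
        have hembz : BDEProof.emb d 1 (zf p) = BDEProof.emb d 1 (zf p') := by rw [hz]
        rw [hzf p, hzf p'] at hembz
        have hψeq : ψ ⟨↑(φφ p.1 p.2.1), hMA p.1 (φφ p.1 p.2.1).2⟩
            = ψ ⟨↑(φφ p'.1 p'.2.1), hMA p'.1 (φφ p'.1 p'.2.1).2⟩ := Subtype.val_injective hembz
        have haeq := ψ.injective hψeq
        have hveq : (↑(φφ p.1 p.2.1) : EuclideanSpace ℝ (Fin d)) = ↑(φφ p'.1 p'.2.1) :=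
          congrArg Subtype.val haeq
        have hjeq : p.1 = p'.1 :=
          hjuniq _ _ _ (hveq ▸ (φφ p.1 p.2.1).2) (φφ p'.1 p'.2.1).2
        obtain ⟨j, x⟩ := p
        obtain ⟨j', x'⟩ := p'
        simp only at hjeq hveq
        subst hjeq
        have hx : φφ j x.1 = φφ j x'.1 := Subtype.val_injective hveq
        have hval : x.1 = x'.1 := (φφ j).injective hx
        have hxx : x = x' := Subtype.val_injective hval
        rw [hxx]
      have hcard := Fintype.card_le_of_injective _ hinj
      rw [Fintype.card_prod, Fintype.card_fin, Fintype.card_coe, Fintype.card_coe] at hcard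
      exact hcard
    -- Step 2 : volume comparison
    have step2 : hY1fin.toFinset.card ≤ hY2fin.toFinset.card * n := by
      have hcnt := BDEProof.counting hαpos one_pos hY1fin hY2fin
        (by rw [hrc_def]; ring_nf; linarith)
      rw [ENNReal.ofReal_one, one_pow, mul_one, hαd] at hcnt
      exact_mod_cast hcnt
    -- Step 3 : α-lattice points near S inject into the Hall neighborhood
    have step3 : hY2fin.toFinset.card ≤ (s.biUnion tA).card := by
      apply Finset.card_le_card_of_injOn
        (fun z => (⟨BDEProof.emb d α z, ⟨z, rfl⟩⟩ : ↥(Set.range (BDEProof.emb d α))))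
      · intro z hz
        rw [Finset.mem_coe, Set.Finite.mem_toFinset] at hz
        have hz2 : BDEProof.emb d α z ∈ BDEProof.nbhd d (rc + (cm + c')) Sset :=
          BDEProof.nbhd_nbhd hz
        obtain ⟨x0, hx0, hdist⟩ := hz2
        obtain ⟨x, hx, rfl⟩ := hx0
        refine Finset.mem_biUnion.mpr ⟨x, Finset.mem_coe.mp hx, ?_⟩
        rw [hmem_tA]
        rw [dist_comm] at hdist
        rw [hR_def]
        simp only
        linarith
      · intro z hz z' hz' hzz'
        have : BDEProof.emb d α z = BDEProof.emb d α z' := congrArg Subtype.val hzz'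
        exact BDEProof.emb_injective hαpos.ne' this
    calc s.card ≤ hY2fin.toFinset.card := by
          have h := step1.trans step2
          rw [mul_comm (hY2fin.toFinset.card) n] at h
          exact Nat.le_of_mul_le_mul_left h hn
      _ ≤ (s.biUnion tA).card := step3
  -- Hall condition B
  have hallB : ∀ t : Finset ↥(Set.range (BDEProof.emb d α)), t.card ≤ (t.biUnion tB).card := by
    intro t
    set Tset : Set (EuclideanSpace ℝ (Fin d)) := Subtype.val '' (↑t : Set ↥(Set.range (BDEProof.emb d α))) with hTset
    obtain ⟨ρ₁, hρ₁⟩ := (Metric.isBounded_iff_subset_closedBall 0).mp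
      ((t.finite_toSet.image Subtype.val).isBounded)
    have hB1fin : (BDEProof.latP d α Tset).Finite := BDEProof.latP_finite hαpos hρ₁
    have hB2fin : (BDEProof.latP d 1 (BDEProof.nbhd d rc Tset)).Finite :=
      BDEProof.latP_finite one_pos (BDEProof.nbhd_subset_closedBall hρ₁)
    -- Step 1 : t.card ≤ number of α-lattice points in T
    have step1 : t.card ≤ hB1fin.toFinset.card := by
      have hmap : ∀ y : {x // x ∈ t}, ∃ z : Fin d → ℤ, BDEProof.emb d α z = ↑(y.1) :=
        fun y => (y.1).2
      choose zt hzt using hmap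
      have hztmem : ∀ y, zt y ∈ hB1fin.toFinset := by
        intro y
        rw [Set.Finite.mem_toFinset]
        show BDEProof.emb d α (zt y) ∈ Tset
        rw [hzt y]
        exact ⟨y.1, Finset.mem_coe.mpr y.2, rfl⟩
      have hinj : Function.Injective (fun y : {x // x ∈ t} =>
          (⟨zt y, hztmem y⟩ : ↥(hB1fin.toFinset))) := by
        intro y y' hyy'
        have hz : zt y = zt y' := congrArg Subtype.val hyy'
        have : BDEProof.emb d α (zt y) = BDEProof.emb d α (zt y') := by rw [hz]
        rw [hzt y, hzt y'] at this
        exact Subtype.val_injective (Subtype.val_injective this)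
      have hcard := Fintype.card_le_of_injective _ hinj
      rw [Fintype.card_coe, Fintype.card_coe] at hcard
      exact hcard
    -- Step 2 : volume comparison
    have step2 : hB1fin.toFinset.card * n ≤ hB2fin.toFinset.card := by
      have hcnt := BDEProof.counting one_pos hαpos hB1fin hB2fin
        (by rw [hrc_def]; ring_nf; linarith)
      rw [ENNReal.ofReal_one, one_pow, mul_one, hαd] at hcnt
      exact_mod_cast hcnt
    -- Step 3 : project the ℤ-lattice points near T into M i, with fibers of size ≤ n
    set aA : (Fin d → ℤ) → ↥A := fun z => ψ.symm ⟨BDEProof.emb d 1 z, ⟨z, rfl⟩⟩ with haA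
    set F : (Fin d → ℤ) → EuclideanSpace ℝ (Fin d) :=
      fun z => ↑((φφ (jdx (aA z))).symm ⟨↑(aA z), hjdx (aA z)⟩) with hF
    set U := hB2fin.toFinset with hU
    have hψaA : ∀ z, (↑(ψ (aA z)) : EuclideanSpace ℝ (Fin d)) = BDEProof.emb d 1 z := by
      intro z
      rw [haA]
      simp only [Equiv.apply_symm_apply]
    have hφaA : ∀ z, (↑(φφ (jdx (aA z)) ((φφ (jdx (aA z))).symm ⟨↑(aA z), hjdx (aA z)⟩)) : EuclideanSpace ℝ (Fin d)) = ↑(aA z) := by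
      intro z
      rw [Equiv.apply_symm_apply]
    have hfiber : ∀ e ∈ U.image F, (U.filter (fun z => F z = e)).card ≤ n := by
      intro e _
      have hle := Finset.card_le_card_of_injOn (fun z => jdx (aA z))
        (by intro z _; exact Finset.mem_univ (jdx (aA z))) (s := U.filter (fun z => F z = e))
        (t := Finset.univ) ?_
      · rwa [Finset.card_univ, Fintype.card_fin] at hle
      · intro z hz z' hz' hj
        have hj' : jdx (aA z) = jdx (aA z') := hj
        simp only [Finset.coe_filter, Set.mem_setOf_eq] at hz hz'
        have hFz : F z = F z' := by rw [hz.2, hz'.2]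
        have hx : ((φφ (jdx (aA z))).symm ⟨↑(aA z), hjdx (aA z)⟩ : ↥(M i))
            = (φφ (jdx (aA z'))).symm ⟨↑(aA z'), hjdx (aA z')⟩ := Subtype.val_injective hFz
        have key : (↑(aA z) : EuclideanSpace ℝ (Fin d)) = ↑(aA z') := by
          rw [← hφaA z, ← hφaA z', hx, hj']
        have haz : aA z = aA z' := Subtype.val_injective key
        have hemb : BDEProof.emb d 1 z = BDEProof.emb d 1 z' := by
          rw [← hψaA z, ← hψaA z', haz]
        exact BDEProof.emb_injective one_ne_zero hemb
    have step3 : U.card ≤ n * (U.image F).card := Finset.card_le_mul_card_image U n hfiber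
    -- Step 4 : image of F lands in the Hall neighborhoods
    have step4 : (U.image F).card ≤ (t.biUnion tB).card := by
      apply Finset.card_le_card_of_injOn
        (fun e => if he : e ∈ M i then (⟨e, he⟩ : ↥(M i)) else Classical.arbitrary _)
      · intro e he
        obtain ⟨z, hz, rfl⟩ := Finset.mem_image.mp he
        have heM : F z ∈ M i := by
          rw [hF]
          exact ((φφ (jdx (aA z))).symm ⟨↑(aA z), hjdx (aA z)⟩).2
        beta_reduce
        rw [dif_pos heM]
        rw [hU, Set.Finite.mem_toFinset] at hz
        obtain ⟨x0, hx0, hdist⟩ := hz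
        obtain ⟨y, hy, rfl⟩ := hx0
        refine Finset.mem_biUnion.mpr ⟨y, Finset.mem_coe.mp hy, ?_⟩
        rw [hmem_tB]
        have h1 : dist (F z) (↑(aA z) : EuclideanSpace ℝ (Fin d)) < cm := by
          have h1a := hφφ' (jdx (aA z)) ((φφ (jdx (aA z))).symm ⟨↑(aA z), hjdx (aA z)⟩)
          rw [hφaA z] at h1a
          exact lt_of_lt_of_le h1a (hcmj _)
        have h2 : dist (↑(aA z) : EuclideanSpace ℝ (Fin d)) (BDEProof.emb d 1 z) < c' := by
          have h2a := hψ' (aA z)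
          rwa [hψaA z] at h2a
        have h3 := dist_triangle (F z) (↑(aA z) : EuclideanSpace ℝ (Fin d)) (BDEProof.emb d 1 z)
        have h4 := dist_triangle (F z) (BDEProof.emb d 1 z) (↑y : EuclideanSpace ℝ (Fin d))
        rw [dist_comm (↑y : EuclideanSpace ℝ (Fin d)) (F z)]
        rw [hR_def]
        linarith
      · intro e he e' he' hee'
        obtain ⟨z, hz, rfl⟩ := Finset.mem_image.mp (Finset.mem_coe.mp he)
        obtain ⟨z', hz', rfl⟩ := Finset.mem_image.mp (Finset.mem_coe.mp he')
        have heM : F z ∈ M i := by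
          rw [hF]; exact ((φφ (jdx (aA z))).symm ⟨↑(aA z), hjdx (aA z)⟩).2
        have heM' : F z' ∈ M i := by
          rw [hF]; exact ((φφ (jdx (aA z'))).symm ⟨↑(aA z'), hjdx (aA z')⟩).2
        have hee2 : (if he : F z ∈ M i then (⟨F z, he⟩ : ↥(M i)) else Classical.arbitrary _)
            = (if he : F z' ∈ M i then (⟨F z', he⟩ : ↥(M i)) else Classical.arbitrary _) := hee'
        rw [dif_pos heM, dif_pos heM'] at hee2
        exact congrArg Subtype.val hee2
    -- chain the inequalities
    have chain : n * t.card ≤ n * (t.biUnion tB).card := by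
      calc n * t.card = t.card * n := mul_comm _ _
        _ ≤ hB1fin.toFinset.card * n := Nat.mul_le_mul_right n step1
        _ ≤ hB2fin.toFinset.card := step2
        _ ≤ n * (U.image F).card := step3
        _ ≤ n * (t.biUnion tB).card := Nat.mul_le_mul_left n step4
    exact Nat.le_of_mul_le_mul_left chain hn
  obtain ⟨f, hfinj, hfmem⟩ := (Finset.all_card_le_biUnion_card_iff_exists_injective tA).mp hallA
  obtain ⟨g, hginj, hgmem⟩ := (Finset.all_card_le_biUnion_card_iff_exists_injective tB).mp hallB
  obtain ⟨e, he⟩ := BDEProof.sb_rel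
    (fun (x : ↥(M i)) (y : ↥(Set.range (BDEProof.emb d α))) =>
      dist (x : EuclideanSpace ℝ (Fin d)) ↑y ≤ R) f g hfinj hginj
    (fun x => (hmem_tA x (f x)).1 (hfmem x))
    (fun y => by have h := (hmem_tB y (g y)).1 (hgmem y); rwa [dist_comm] at h)
  refine ⟨R + 1, by linarith, e, fun x => ?_⟩
  have h := he x
  rw [dist_eq_norm] at h
  linarith
end

section
/- Any two full-rank lattices in ℝ^d of the same covolume are bounded distance equivalent: if L_1 = B_1ℤ^d and L_2 = B_2ℤ^d with B_1, B_2 ∈ GL_d(ℝ) and |det B_1| = |det B_2|, then L_1 and L_2 are bounded distance equivalent. -/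
section Aux

open Function Set MeasureTheory ZSpan Submodule Pointwise Module


theorem sb_pointwise {α β : Type*} {f : α → β} {g : β → α}
    (hf : Injective f) (hg : Injective g) :
    ∃ h : α ≃ β, ∀ a, h a = f a ∨ g (h a) = a := by
  classical
  cases isEmpty_or_nonempty β with
  | inl hβ =>
    have : IsEmpty α := ⟨fun a => IsEmpty.elim hβ (f a)⟩
    exact ⟨Equiv.equivOfIsEmpty α β, fun a => IsEmpty.elim this a⟩
  | inr hβ =>
  set A : Set α := ⋃ n, (g ∘ f)^[n] '' (Set.range g)ᶜ with hA
  have hC : (Set.range g)ᶜ ⊆ A := by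
    intro a ha; exact Set.mem_iUnion.2 ⟨0, by simpa using ha⟩
  have hmap : ∀ a ∈ A, g (f a) ∈ A := by
    intro a ha
    obtain ⟨n, x, hx, rfl⟩ : ∃ n x, x ∈ (Set.range g)ᶜ ∧ (g ∘ f)^[n] x = a := by
      obtain ⟨n, hs⟩ := Set.mem_iUnion.1 ha
      obtain ⟨x, hx, hxe⟩ := hs
      exact ⟨n, x, hx, hxe⟩
    exact Set.mem_iUnion.2 ⟨n + 1, ⟨x, hx, by rw [Function.iterate_succ_apply']; rfl⟩⟩
  set h0 : α → β := fun a => if a ∈ A then f a else Function.invFun g a with hh0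
  have hnot : ∀ a ∉ A, g (h0 a) = a := by
    intro a ha
    have : a ∈ Set.range g := by by_contra h; exact ha (hC h)
    simp only [hh0, if_neg ha]
    exact Function.invFun_eq this
  have hin : ∀ a ∈ A, h0 a = f a := fun a ha => by simp [hh0, if_pos ha]
  have hinj : Injective h0 := by
    intro a a' he
    by_cases ha : a ∈ A <;> by_cases ha' : a' ∈ A
    · rw [hin a ha, hin a' ha'] at he; exact hf he
    · exfalso; rw [hin a ha] at he
      have : g (f a) = a' := by rw [he]; exact hnot a' ha'
      exact ha' (this ▸ hmap a ha)
    · exfalso; rw [hin a' ha'] at he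
      have : g (f a') = a := by rw [← he]; exact hnot a ha
      exact ha (this ▸ hmap a' ha')
    · rw [← hnot a ha, ← hnot a' ha', he]
  have hsurj : Surjective h0 := by
    intro b
    by_cases hb : g b ∈ A
    · obtain ⟨n, x, hx, hxe⟩ : ∃ n x, x ∈ (Set.range g)ᶜ ∧ (g ∘ f)^[n] x = g b := by
        obtain ⟨n, hs⟩ := Set.mem_iUnion.1 hb
        obtain ⟨x, hx, hxe⟩ := hs
        exact ⟨n, x, hx, hxe⟩
      cases n with
      | zero =>
        simp only [Function.iterate_zero, id_eq] at hxe
        exact absurd ⟨b, hxe.symm⟩ hx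
      | succ n =>
        set a := (g ∘ f)^[n] x with hae
        have haA : a ∈ A := Set.mem_iUnion.2 ⟨n, x, hx, rfl⟩
        have : g (f a) = g b := by
          rw [hae]; rw [Function.iterate_succ_apply'] at hxe; exact hxe
        exact ⟨a, by rw [hin a haA]; exact hg this⟩
    · exact ⟨g b, hg (hnot (g b) hb)⟩
  refine ⟨Equiv.ofBijective h0 ⟨hinj, hsurj⟩, fun a => ?_⟩
  by_cases ha : a ∈ A
  · exact Or.inl (hin a ha)
  · exact Or.inr (hnot a ha)

lemma norm_le_of_mem_fd {d : ℕ} (b : Basis (Fin d) ℝ (EuclideanSpace ℝ (Fin d)))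
    {x : EuclideanSpace ℝ (Fin d)} (hx : x ∈ fundamentalDomain b) : ‖x‖ ≤ ∑ i, ‖b i‖ := by
  rw [← fract_eq_self.mpr hx]; exact norm_fract_le b x

lemma counting {d : ℕ} (b₁ b₂ : Basis (Fin d) ℝ (EuclideanSpace ℝ (Fin d)))
    (hv : volume (fundamentalDomain b₁) = volume (fundamentalDomain b₂))
    (S : Finset (EuclideanSpace ℝ (Fin d))) (hS : ∀ x ∈ S, x ∈ span ℤ (Set.range b₁)) :
    ∃ T : Finset (EuclideanSpace ℝ (Fin d)), (∀ y ∈ T, y ∈ span ℤ (Set.range b₂)) ∧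
      S.card ≤ T.card ∧
      ∀ y ∈ T, ∃ x ∈ S, ‖x - y‖ ≤ (∑ i, ‖b₁ i‖) + ∑ i, ‖b₂ i‖ := by
  classical
  set F₁ := fundamentalDomain b₁ with hF₁
  set F₂ := fundamentalDomain b₂ with hF₂
  set R : ℝ := (∑ i, ‖b₁ i‖) + ∑ i, ‖b₂ i‖ with hR
  set U : Set (EuclideanSpace ℝ (Fin d)) := ⋃ x ∈ S, x +ᵥ F₁ with hU
  set L₂ : Set (EuclideanSpace ℝ (Fin d)) :=
    (span ℤ (Set.range b₂) : Set (EuclideanSpace ℝ (Fin d))) with hL₂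
  set T₀ : Set (EuclideanSpace ℝ (Fin d)) := {y | y ∈ L₂ ∧ ((y +ᵥ F₂) ∩ U).Nonempty} with hT₀
  have hclose : ∀ y ∈ T₀, ∃ x ∈ S, ‖x - y‖ ≤ R := by
    rintro y ⟨hy, u, hu1, hu2⟩
    obtain ⟨f₂, hf₂, rfl⟩ := Set.mem_vadd_set.1 hu1
    obtain ⟨x, hxS, hxm⟩ := Set.mem_iUnion₂.1 hu2
    obtain ⟨f₁, hf₁, hfe⟩ := Set.mem_vadd_set.1 hxm
    refine ⟨x, hxS, ?_⟩
    have hfe' : x + f₁ = f₂ + y := by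
      have : x + f₁ = y + f₂ := hfe
      rw [this, add_comm]
    have hxy : x - y = f₂ - f₁ := sub_eq_sub_iff_add_eq_add.mpr hfe'
    rw [hxy, hR]
    exact (norm_sub_le _ _).trans
      (by rw [add_comm (∑ i, ‖b₁ i‖)]
          exact add_le_add (norm_le_of_mem_fd b₂ hf₂) (norm_le_of_mem_fd b₁ hf₁))
  -- finiteness of T₀
  have hTfin : T₀.Finite := by
    have hsub : T₀ ⊆ (⋃ x ∈ S, Metric.closedBall x R) ∩ L₂ := by
      intro y hy
      obtain ⟨x, hxS, hxy⟩ := hclose y hy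
      exact ⟨Set.mem_iUnion₂.2 ⟨x, hxS, by
        rw [Metric.mem_closedBall, dist_comm, dist_eq_norm]; exact hxy⟩, hy.1⟩
    have hbd : Bornology.IsBounded (⋃ x ∈ S, Metric.closedBall x R) :=
      (Bornology.isBounded_biUnion S.finite_toSet).2 (fun x _ => Metric.isBounded_closedBall)
    have hdisc : DiscreteTopology ↥L₂ :=
      inferInstanceAs (DiscreteTopology (span ℤ (Set.range b₂)))
    have hclosed : IsClosed L₂ := by
      have : IsClosed ((span ℤ (Set.range b₂)).toAddSubgroup : Set (EuclideanSpace ℝ (Fin d))) :=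
        AddSubgroup.isClosed_of_discrete
      simpa using this
    exact Set.Finite.subset (Metric.finite_isBounded_inter_isClosed DiscreteTopology.isDiscrete hbd hclosed) hsub
  set T : Finset (EuclideanSpace ℝ (Fin d)) := hTfin.toFinset with hT
  have hmemT : ∀ y, y ∈ T ↔ y ∈ T₀ := fun y => Set.Finite.mem_toFinset hTfin
  -- volume of U
  have hmeas1 : ∀ x ∈ S, MeasurableSet (x +ᵥ F₁) :=
    fun x _ => (fundamentalDomain_measurableSet b₁).const_vadd x
  have hdisj : (↑S : Set (EuclideanSpace ℝ (Fin d))).PairwiseDisjoint (fun x => x +ᵥ F₁) := by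
    intro x hx x' hx' hne
    refine Set.disjoint_left.mpr ?_
    rintro a ha ha'
    obtain ⟨f, hf, rfl⟩ := Set.mem_vadd_set.1 ha
    obtain ⟨f', hf', he⟩ := Set.mem_vadd_set.1 ha'
    have h1 : fract b₁ (x + f) = f := by
      rw [fract_zSpan_add b₁ f (hS x hx)]; exact fract_eq_self.mpr hf
    have h2 : fract b₁ (x' + f') = f' := by
      rw [fract_zSpan_add b₁ f' (hS x' hx')]; exact fract_eq_self.mpr hf'
    have he' : x' + f' = x + f := he
    rw [he', h1] at h2
    apply hne
    have : x' + f = x + f := by rw [← h2] at he'; exact he'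
    have := add_right_cancel this
    exact this.symm
  have hvolU : volume U = (S.card : ENNReal) * volume F₁ := by
    rw [hU, measure_biUnion_finset hdisj hmeas1]
    simp [measure_vadd, Finset.sum_const, nsmul_eq_mul]
  -- covering of U
  have hcover : U ⊆ ⋃ y ∈ T, y +ᵥ F₂ := by
    intro u hu
    set y : EuclideanSpace ℝ (Fin d) := ((floor b₂ u : EuclideanSpace ℝ (Fin d))) with hy
    have humem : u ∈ y +ᵥ F₂ := by
      refine Set.mem_vadd_set.2 ⟨fract b₂ u, fract_mem_fundamentalDomain b₂ u, ?_⟩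
      show y + fract b₂ u = u
      rw [fract_apply, hy]; abel
    have hyT : y ∈ T := (hmemT y).2 ⟨SetLike.coe_mem _, ⟨u, humem, hu⟩⟩
    exact Set.mem_iUnion₂.2 ⟨y, hyT, humem⟩
  have hvolT : volume (⋃ y ∈ T, y +ᵥ F₂) ≤ (T.card : ENNReal) * volume F₂ := by
    refine (measure_biUnion_finset_le T _).trans ?_
    simp [measure_vadd, Finset.sum_const, nsmul_eq_mul]
  have hne0 : volume F₁ ≠ 0 := measure_fundamentalDomain_ne_zero b₁
  have hnetop : volume F₁ ≠ ⊤ := (fundamentalDomain_isBounded b₁).measure_lt_top.ne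
  have hcard : S.card ≤ T.card := by
    have h1 : (S.card : ENNReal) * volume F₁ ≤ (T.card : ENNReal) * volume F₁ := by
      calc (S.card : ENNReal) * volume F₁ = volume U := hvolU.symm
        _ ≤ volume (⋃ y ∈ T, y +ᵥ F₂) := measure_mono hcover
        _ ≤ (T.card : ENNReal) * volume F₂ := hvolT
        _ = (T.card : ENNReal) * volume F₁ := by rw [hv]
    exact_mod_cast (ENNReal.mul_le_mul_iff_left hne0 hnetop).1 h1
  exact ⟨T, fun y hy => ((hmemT y).1 hy).1, hcard, fun y hy => hclose y ((hmemT y).1 hy)⟩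

noncomputable def latticeBasis {d : ℕ} (B : Matrix (Fin d) (Fin d) ℝ) (h : IsUnit B.det) :
    Basis (Fin d) ℝ (EuclideanSpace ℝ (Fin d)) :=
  ((Pi.basisFun ℝ (Fin d)).map
      (Matrix.toLinearEquiv (Pi.basisFun ℝ (Fin d)) B h)).map
    (WithLp.linearEquiv 2 ℝ (Fin d → ℝ)).symm

lemma latticeBasis_coord {d : ℕ} (B : Matrix (Fin d) (Fin d) ℝ) (h : IsUnit B.det)
    (j k : Fin d) : latticeBasis B h j k = B k j := by
  simp [latticeBasis, Matrix.toLinearEquiv, Matrix.toLin_eq_toLin', Matrix.toLin'_apply,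
    Matrix.mulVec_single]

lemma mulVec_eq_sum {d : ℕ} (B : Matrix (Fin d) (Fin d) ℝ) (h : IsUnit B.det)
    (z : Fin d → ℤ) :
    (WithLp.toLp 2 (B.mulVec (fun i => (z i : ℝ))) : EuclideanSpace ℝ (Fin d)) =
      ∑ j, z j • latticeBasis B h j := by
  ext k
  have : (∑ j, z j • latticeBasis B h j) k = ∑ j, z j • (latticeBasis B h j k) := by
    rw [WithLp.ofLp_sum, Finset.sum_apply]; rfl
  rw [this]
  simp only [latticeBasis_coord, Matrix.mulVec, dotProduct, zsmul_eq_mul]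
  exact Finset.sum_congr rfl fun j _ => by ring

lemma range_eq_span {d : ℕ} (B : Matrix (Fin d) (Fin d) ℝ) (h : IsUnit B.det) :
    (Set.range fun z : Fin d → ℤ =>
        (WithLp.toLp 2 (B.mulVec (fun i => (z i : ℝ))) : EuclideanSpace ℝ (Fin d))) =
      (span ℤ (Set.range (latticeBasis B h)) : Set (EuclideanSpace ℝ (Fin d))) := by
  ext v
  constructor
  · rintro ⟨z, rfl⟩
    dsimp only
    rw [mulVec_eq_sum B h z]
    exact sum_mem fun j _ => zsmul_mem (subset_span (Set.mem_range_self j)) (z j)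
  · intro hv
    have hrep := ((latticeBasis B h).mem_span_iff_repr_mem ℤ v).1 hv
    choose z hz using hrep
    refine ⟨z, ?_⟩
    dsimp only
    rw [mulVec_eq_sum B h z]
    conv_rhs => rw [← (latticeBasis B h).sum_repr v]
    refine Finset.sum_congr rfl fun j _ => ?_
    rw [← hz j]
    rw [← Int.cast_smul_eq_zsmul ℝ]
    rfl

lemma vol_fd_eq {d : ℕ} (B₁ B₂ : Matrix (Fin d) (Fin d) ℝ)
    (h₁ : IsUnit B₁.det) (h₂ : IsUnit B₂.det) (hdet : |B₁.det| = |B₂.det|) :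
    volume (fundamentalDomain (latticeBasis B₁ h₁)) =
      volume (fundamentalDomain (latticeBasis B₂ h₂)) := by
  classical
  set b₀ := (EuclideanSpace.basisFun (Fin d) ℝ).toBasis with hb₀
  have hm : ∀ (B : Matrix (Fin d) (Fin d) ℝ) (h : IsUnit B.det),
      b₀.toMatrix (latticeBasis B h) = B := by
    intro B h
    ext k j
    rw [Basis.toMatrix_apply, hb₀, OrthonormalBasis.coe_toBasis_repr_apply,
      EuclideanSpace.basisFun_repr, latticeBasis_coord]
  have key : ∀ (B : Matrix (Fin d) (Fin d) ℝ) (h : IsUnit B.det),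
      volume (fundamentalDomain (latticeBasis B h)) =
        ENNReal.ofReal |B.det| * volume (fundamentalDomain b₀) := by
    intro B h
    rw [ZSpan.measure_fundamentalDomain (latticeBasis B h) volume b₀,
      Basis.det_apply, hm B h]
  rw [key B₁ h₁, key B₂ h₂, hdet]
lemma exists_inj {d : ℕ} (b₁ b₂ : Basis (Fin d) ℝ (EuclideanSpace ℝ (Fin d)))
    (hv : volume (fundamentalDomain b₁) = volume (fundamentalDomain b₂)) :
    ∃ f : (span ℤ (Set.range b₁) : Set (EuclideanSpace ℝ (Fin d))) →
          (span ℤ (Set.range b₂) : Set (EuclideanSpace ℝ (Fin d))),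
      Function.Injective f ∧
      ∀ x : (span ℤ (Set.range b₁) : Set (EuclideanSpace ℝ (Fin d))),
        ‖(x : EuclideanSpace ℝ (Fin d)) - (f x : EuclideanSpace ℝ (Fin d))‖ ≤
        (∑ i, ‖b₁ i‖) + ∑ i, ‖b₂ i‖ := by
  classical
  set R : ℝ := (∑ i, ‖b₁ i‖) + ∑ i, ‖b₂ i‖ with hR
  set L₂ : Set (EuclideanSpace ℝ (Fin d)) :=
    (span ℤ (Set.range b₂) : Set (EuclideanSpace ℝ (Fin d))) with hL₂
  have hdisc : DiscreteTopology ↥L₂ :=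
    inferInstanceAs (DiscreteTopology (span ℤ (Set.range b₂)))
  have hclosed : IsClosed L₂ := by
    have : IsClosed ((span ℤ (Set.range b₂)).toAddSubgroup :
        Set (EuclideanSpace ℝ (Fin d))) := AddSubgroup.isClosed_of_discrete
    simpa using this
  have hfin : ∀ x : EuclideanSpace ℝ (Fin d),
      ({y : L₂ | ‖x - (y : EuclideanSpace ℝ (Fin d))‖ ≤ R}).Finite := by
    intro x
    have hfin2 : (Metric.closedBall x R ∩ L₂).Finite :=
      Metric.finite_isBounded_inter_isClosed DiscreteTopology.isDiscrete Metric.isBounded_closedBall hclosed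
    have : {y : L₂ | ‖x - (y : EuclideanSpace ℝ (Fin d))‖ ≤ R} =
        (fun y : L₂ => (y : EuclideanSpace ℝ (Fin d))) ⁻¹' (Metric.closedBall x R ∩ L₂) := by
      ext y
      simp only [Set.mem_setOf_eq, Set.mem_preimage, Set.mem_inter_iff, Metric.mem_closedBall]
      constructor
      · intro hy; exact ⟨by rw [dist_comm, dist_eq_norm]; exact hy, y.2⟩
      · intro hy; rw [← dist_eq_norm, dist_comm]; exact hy.1
    rw [this]
    exact Set.Finite.preimage (Subtype.coe_injective.injOn) hfin2
  set t : (span ℤ (Set.range b₁) : Set (EuclideanSpace ℝ (Fin d))) → Finset ↥L₂ :=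
    fun x => (hfin (x : EuclideanSpace ℝ (Fin d))).toFinset with ht
  have hall : ∀ s : Finset (span ℤ (Set.range b₁) : Set (EuclideanSpace ℝ (Fin d))),
      s.card ≤ (s.biUnion t).card := by
    intro s
    set S : Finset (EuclideanSpace ℝ (Fin d)) :=
      s.image Subtype.val with hSdef
    have hScard : S.card = s.card := Finset.card_image_of_injective s Subtype.val_injective
    have hS : ∀ x ∈ S, x ∈ span ℤ (Set.range b₁) := by
      intro x hx
      obtain ⟨x', _, rfl⟩ := Finset.mem_image.1 hx
      exact x'.2
    obtain ⟨T, hT1, hT2, hT3⟩ := counting b₁ b₂ hv S hS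
    set T' : Finset ↥L₂ := T.attach.image (fun y => (⟨y.1, hT1 y.1 y.2⟩ : ↥L₂)) with hT'
    have hT'card : T'.card = T.card := by
      rw [hT', Finset.card_image_of_injective _ (fun y y' hyy => Subtype.ext
        (by simpa using congrArg Subtype.val hyy)), Finset.card_attach]
    have hsub : T' ⊆ s.biUnion t := by
      intro y' hy'
      obtain ⟨⟨y, hyT⟩, _, rfl⟩ := Finset.mem_image.1 hy'
      obtain ⟨x, hxS, hxy⟩ := hT3 y hyT
      obtain ⟨x', hx's, rfl⟩ := Finset.mem_image.1 hxS
      refine Finset.mem_biUnion.2 ⟨x', hx's, ?_⟩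
      rw [ht]
      exact (Set.Finite.mem_toFinset _).2 hxy
    calc s.card = S.card := hScard.symm
      _ ≤ T.card := hT2
      _ = T'.card := hT'card.symm
      _ ≤ (s.biUnion t).card := Finset.card_le_card hsub
  obtain ⟨f, hfinj, hft⟩ := (Finset.all_card_le_biUnion_card_iff_exists_injective t).1 hall
  refine ⟨f, hfinj, fun x => ?_⟩
  exact ((hfin (x : EuclideanSpace ℝ (Fin d))).mem_toFinset).1 (hft x)

lemma bde_span {d : ℕ} (b₁ b₂ : Basis (Fin d) ℝ (EuclideanSpace ℝ (Fin d)))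
    (hv : volume (fundamentalDomain b₁) = volume (fundamentalDomain b₂)) :
    BDE (span ℤ (Set.range b₁) : Set (EuclideanSpace ℝ (Fin d)))
        (span ℤ (Set.range b₂) : Set (EuclideanSpace ℝ (Fin d))) := by
  obtain ⟨f, hfinj, hfb⟩ := exists_inj b₁ b₂ hv
  obtain ⟨g, hginj, hgb⟩ := exists_inj b₂ b₁ hv.symm
  obtain ⟨h, hh⟩ := sb_pointwise hfinj hginj
  set R : ℝ := (∑ i, ‖b₁ i‖) + ∑ i, ‖b₂ i‖ with hRdef
  have hR0 : 0 ≤ R := add_nonneg (Finset.sum_nonneg fun i _ => norm_nonneg _)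
    (Finset.sum_nonneg fun i _ => norm_nonneg _)
  refine ⟨R + 1, by linarith, h, fun x => ?_⟩
  rcases hh x with hcase | hcase
  · rw [hcase]
    exact lt_of_le_of_lt (hfb x) (by linarith)
  · have hb := hgb (h x)
    rw [hcase] at hb
    have : ‖(x : EuclideanSpace ℝ (Fin d)) - (h x : EuclideanSpace ℝ (Fin d))‖ =
        ‖(h x : EuclideanSpace ℝ (Fin d)) - (x : EuclideanSpace ℝ (Fin d))‖ := norm_sub_rev _ _
    rw [this]
    have hcomm : (∑ i, ‖b₂ i‖) + ∑ i, ‖b₁ i‖ = R := by rw [hRdef]; ring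
    rw [hcomm] at hb
    exact lt_of_le_of_lt hb (by linarith)

end Aux

theorem lattices_same_covolume_bde {d : ℕ} (B₁ B₂ : Matrix (Fin d) (Fin d) ℝ)
    (h₁ : IsUnit B₁.det) (h₂ : IsUnit B₂.det) (hdet : |B₁.det| = |B₂.det|) :
    BDE (Set.range fun z : Fin d → ℤ =>
          (WithLp.toLp 2 (B₁.mulVec (fun i => (z i : ℝ))) : EuclideanSpace ℝ (Fin d)))
        (Set.range fun z : Fin d → ℤ =>
          (WithLp.toLp 2 (B₂.mulVec (fun i => (z i : ℝ))) : EuclideanSpace ℝ (Fin d))) := by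
  rw [range_eq_span B₁ h₁, range_eq_span B₂ h₂]
  exact bde_span _ _ (vol_fd_eq B₁ B₂ h₁ h₂ hdet)
end
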